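/- arXiv:2006.16785 — 2 statements merged into one kernel-verified Lean document; each statement's English description precedes it below -/
import Mathlib

section
/- Under the same assumptions (f A-Lipschitz, μ B-Lipschitz, r δ-Lipschitz, C = A·max(1,B), γ ∈ [0,1)), if additionally γ·C ≠ 1, then the finite-horizon value Q_T(s,a) = Σ_{k=0}^{T-1} γ^k r(F^[k](s,a)) is Lipschitz with constant δ · (1 - (γC)^T) / (1 - γC). -/
/-!
`F` is `f` followed by the graph map `x ↦ (x, μ x)`, which is `max 1 B`-Lipschitz for the sup
metric, so `F` is `C`-Lipschitz and `r ∘ F^[k]` is `δ C^k`-Lipschitz. Summing the discounted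
terms bounds the Lipschitz constant of `Q_T` by `δ Σ_{k<T} (γ C)^k`, a finite geometric series.
-/

open Finset NNReal

theorem geom_sum_eq_one_sub_div {K : Type*} [DivisionRing K] {x : K} (hx : x ≠ 1) (n : ℕ) :
    ∑ i ∈ range n, x ^ i = (1 - x ^ n) / (1 - x) := by
  simpa [← range_eq_Ico] using geom_sum_Ico' hx (Nat.zero_le n)

theorem LipschitzWith.dist_discounted_sum_iterate_le {α : Type*} [PseudoMetricSpace α]
    {F : α → α} {r : α → ℝ} {K δ : ℝ≥0} (hF : LipschitzWith K F) (hr : LipschitzWith δ r)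
    {γ : ℝ} (hγ : 0 ≤ γ) (T : ℕ) (p q : α) :
    dist (∑ k ∈ range T, γ ^ k * r (F^[k] p)) (∑ k ∈ range T, γ ^ k * r (F^[k] q))
      ≤ δ * (∑ k ∈ range T, (γ * K) ^ k) * dist p q := by
  calc dist (∑ k ∈ range T, γ ^ k * r (F^[k] p)) (∑ k ∈ range T, γ ^ k * r (F^[k] q))
      ≤ ∑ k ∈ range T, dist (γ ^ k * r (F^[k] p)) (γ ^ k * r (F^[k] q)) :=
        dist_sum_sum_le _ _ _
    _ = ∑ k ∈ range T, γ ^ k * dist (r (F^[k] p)) (r (F^[k] q)) := by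
        simp only [← smul_eq_mul, dist_smul₀, Real.norm_eq_abs, abs_pow, abs_of_nonneg hγ]
    _ ≤ ∑ k ∈ range T, γ ^ k * (δ * K ^ k * dist p q) := by
        gcongr with k
        exact_mod_cast (hr.comp (hF.iterate k)).dist_le_mul p q
    _ = δ * (∑ k ∈ range T, (γ * K) ^ k) * dist p q := by
        rw [mul_sum, sum_mul]
        refine sum_congr rfl fun k _ => ?_
        ring

theorem stmt3_general {X Y : Type*} [MetricSpace X] [MetricSpace Y]
    (A B δ γ : ℝ) (hA : 0 ≤ A) (hB : 0 ≤ B) (hδ : 0 ≤ δ)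
    (hγ0 : 0 ≤ γ)
    (f : X × Y → X) (μ : X → Y) (r : X × Y → ℝ)
    (hf : ∀ p q : X × Y, dist (f p) (f q) ≤ A * dist p q)
    (hμ : ∀ s t : X, dist (μ s) (μ t) ≤ B * dist s t)
    (hr : ∀ p q : X × Y, dist (r p) (r q) ≤ δ * dist p q)
    (F : X × Y → X × Y) (hF : ∀ p, F p = (f p, μ (f p)))
    (C : ℝ) (hC : C = A * max 1 B) (hne : γ * C ≠ 1) (T : ℕ) :
    ∀ p q : X × Y,
      dist (∑ k ∈ Finset.range T, γ ^ k * r (F^[k] p))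
           (∑ k ∈ Finset.range T, γ ^ k * r (F^[k] q))
        ≤ (δ * (1 - (γ * C) ^ T) / (1 - γ * C)) * dist p q := by
  intro p q
  lift A to ℝ≥0 using hA
  lift B to ℝ≥0 using hB
  lift δ to ℝ≥0 using hδ
  have hF_lip : LipschitzWith (max 1 B * A) F := by
    rw [show F = fun p => (f p, μ (f p)) from funext hF]
    exact (LipschitzWith.id.prodMk (.of_dist_le_mul hμ)).comp (.of_dist_le_mul hf)
  have hC' : C = ((max 1 B * A : ℝ≥0) : ℝ) := by rw [hC]; push_cast; ring
  subst hC'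
  calc _ ≤ δ * (∑ k ∈ range T, (γ * ↑(max 1 B * A)) ^ k) * dist p q :=
        hF_lip.dist_discounted_sum_iterate_le (.of_dist_le_mul hr) hγ0 T p q
    _ = _ := by rw [geom_sum_eq_one_sub_div hne, mul_div_assoc]

theorem stmt3 {X Y : Type*} [MetricSpace X] [MetricSpace Y]
    (A B δ γ : ℝ) (hA : 0 ≤ A) (hB : 0 ≤ B) (hδ : 0 ≤ δ)
    (hγ0 : 0 ≤ γ) (hγ1 : γ < 1)
    (f : X × Y → X) (μ : X → Y) (r : X × Y → ℝ)
    (hf : ∀ p q : X × Y, dist (f p) (f q) ≤ A * dist p q)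
    (hμ : ∀ s t : X, dist (μ s) (μ t) ≤ B * dist s t)
    (hr : ∀ p q : X × Y, dist (r p) (r q) ≤ δ * dist p q)
    (F : X × Y → X × Y) (hF : ∀ p, F p = (f p, μ (f p)))
    (C : ℝ) (hC : C = A * max 1 B) (hne : γ * C ≠ 1) (T : ℕ) :
    ∀ p q : X × Y,
      dist (∑ k ∈ Finset.range T, γ ^ k * r (F^[k] p))
           (∑ k ∈ Finset.range T, γ ^ k * r (F^[k] q))
        ≤ (δ * (1 - (γ * C) ^ T) / (1 - γ * C)) * dist p q :=
  stmt3_general A B δ γ hA hB hδ hγ0 f μ r hf hμ hr F hF C hC hne T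
end

section
/- Let f : X × Y → X be A-Lipschitz, μ : X → Y be B-Lipschitz, and r : X × Y → ℝ be δ-Lipschitz and bounded (|r| ≤ R for some R). Let γ ∈ [0,1), C = A·max(1,B), and assume γ·C < 1. Then the infinite-horizon value Q(s,a) := Σ_{k=0}^{∞} γ^k r(F^[k](s,a)) is well defined (the series converges absolutely) and Q is Lipschitz with constant δ / (1 - γC). -/
/-!
Since `F` is `C`-Lipschitz, so is each iterate `F^[k]` with constant `C ^ k`, and the `k`-th
terms of the two series differ by at most `δ (γ C) ^ k d(p, q)`; summing this geometric series
gives the constant `δ / (1 - γ C)`. Absolute convergence is domination by `R γ ^ k`.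
-/

section Discounted

variable {α β Y : Type*} [PseudoMetricSpace α] [PseudoMetricSpace β] [PseudoMetricSpace Y]

lemma dist_prodMk_comp_le {f : α → β} {μ : β → Y} {A B : ℝ} (hA : 0 ≤ A) (hB : 0 ≤ B)
    (hf : ∀ p q, dist (f p) (f q) ≤ A * dist p q) (hμ : ∀ s t, dist (μ s) (μ t) ≤ B * dist s t)
    (p q : α) :
    dist (f p, μ (f p)) (f q, μ (f q)) ≤ A * max 1 B * dist p q := by
  have hpq := dist_nonneg (x := p) (y := q)
  rw [Prod.dist_eq, max_le_iff]
  constructor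
  · calc dist (f p) (f q) ≤ A * dist p q := hf p q
      _ ≤ A * max 1 B * dist p q := by gcongr; exact le_mul_of_one_le_right hA (le_max_left _ _)
  · calc dist (μ (f p)) (μ (f q)) ≤ B * (A * dist p q) :=
          (hμ _ _).trans (mul_le_mul_of_nonneg_left (hf p q) hB)
      _ ≤ A * max 1 B * dist p q := by nlinarith [le_max_right 1 B, mul_nonneg hA hpq]

lemma dist_iterate_le_pow_mul {F : α → α} {C : ℝ} (hC : 0 ≤ C)
    (hF : ∀ p q, dist (F p) (F q) ≤ C * dist p q) (k : ℕ) (p q : α) :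
    dist (F^[k] p) (F^[k] q) ≤ C ^ k * dist p q := by
  simpa [Real.coe_toNNReal _ hC] using ((LipschitzWith.of_dist_le' hF).iterate k).dist_le_mul p q

lemma summable_abs_pow_mul_of_abs_le {g : ℕ → ℝ} {γ R : ℝ} (hγ0 : 0 ≤ γ) (hγ1 : γ < 1)
    (hg : ∀ k, |g k| ≤ R) : Summable fun k => |γ ^ k * g k| := by
  refine .of_nonneg_of_le (fun k => abs_nonneg _) (fun k => ?_)
    ((summable_geometric_of_lt_one hγ0 hγ1).mul_right R)
  rw [abs_mul, abs_pow, abs_of_nonneg hγ0]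
  exact mul_le_mul_of_nonneg_left (hg k) (pow_nonneg hγ0 k)

lemma dist_tsum_le_of_abs_sub_le_geometric {u v : ℕ → ℝ} {ρ a : ℝ} (hu : Summable u)
    (hv : Summable v) (hρ0 : 0 ≤ ρ) (hρ1 : ρ < 1) (huv : ∀ k, |u k - v k| ≤ ρ ^ k * a) :
    dist (∑' k, u k) (∑' k, v k) ≤ a / (1 - ρ) := by
  have hgeo : HasSum (fun k => ρ ^ k * a) ((1 - ρ)⁻¹ * a) :=
    (hasSum_geometric_of_lt_one hρ0 hρ1).mul_right a
  rw [Real.dist_eq, ← hu.tsum_sub hv, div_eq_inv_mul]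
  exact tsum_of_norm_bounded hgeo (f := fun k => u k - v k) huv

end Discounted

theorem stmt4 {X Y : Type*} [MetricSpace X] [MetricSpace Y]
    (A B δ γ R : ℝ) (hA : 0 ≤ A) (hB : 0 ≤ B) (hδ : 0 ≤ δ)
    (hγ0 : 0 ≤ γ) (hγ1 : γ < 1)
    (f : X × Y → X) (μ : X → Y) (r : X × Y → ℝ)
    (hf : ∀ p q : X × Y, dist (f p) (f q) ≤ A * dist p q)
    (hμ : ∀ s t : X, dist (μ s) (μ t) ≤ B * dist s t)
    (hr : ∀ p q : X × Y, dist (r p) (r q) ≤ δ * dist p q)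
    (hbound : ∀ p : X × Y, |r p| ≤ R)
    (F : X × Y → X × Y) (hF : ∀ p, F p = (f p, μ (f p)))
    (C : ℝ) (hC : C = A * max 1 B) (hγC : γ * C < 1) :
    (∀ p : X × Y, Summable fun k : ℕ => |γ ^ k * r (F^[k] p)|) ∧
    (∀ p q : X × Y,
      dist (∑' k : ℕ, γ ^ k * r (F^[k] p)) (∑' k : ℕ, γ ^ k * r (F^[k] q))
        ≤ (δ / (1 - γ * C)) * dist p q) := by
  have hC0 : 0 ≤ C := hC ▸ mul_nonneg hA (zero_le_one.trans (le_max_left _ _))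
  have hFlip : ∀ p q, dist (F p) (F q) ≤ C * dist p q := fun p q => by
    simpa only [hF, hC] using dist_prodMk_comp_le hA hB hf hμ p q
  have hsum : ∀ p, Summable fun k => |γ ^ k * r (F^[k] p)| := fun p =>
    summable_abs_pow_mul_of_abs_le hγ0 hγ1 fun k => hbound _
  refine ⟨hsum, fun p q => ?_⟩
  have hterm : ∀ k : ℕ, |γ ^ k * r (F^[k] p) - γ ^ k * r (F^[k] q)|
      ≤ (γ * C) ^ k * (δ * dist p q) := fun k => by
    rw [← mul_sub, abs_mul, abs_of_nonneg (pow_nonneg hγ0 k), ← Real.dist_eq, mul_pow, mul_assoc]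
    gcongr
    calc dist (r (F^[k] p)) (r (F^[k] q)) ≤ δ * (C ^ k * dist p q) :=
          (hr _ _).trans (mul_le_mul_of_nonneg_left (dist_iterate_le_pow_mul hC0 hFlip k p q) hδ)
      _ = C ^ k * (δ * dist p q) := by ring
  calc _ ≤ δ * dist p q / (1 - γ * C) :=
        dist_tsum_le_of_abs_sub_le_geometric (hsum p).of_abs (hsum q).of_abs
          (mul_nonneg hγ0 hC0) hγC hterm
    _ = δ / (1 - γ * C) * dist p q := by ring
end
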